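/- Let L > 0 and let μ be a probability measure on ℝ supported in [−L, L] with ∫ t dμ(t) = 0. Then for every real r with r > L and every z ∈ ℂ with |z| = r, the Cauchy transform satisfies |G(z)| ≥ 1/r − (L²/r²)·1/(r−L). -/

import Mathlib

open MeasureTheory

/-- The Cauchy transform of a finite measure on ℝ. -/
noncomputable def cauchyTransform (μ : Measure ℝ) (z : ℂ) : ℂ :=
  ∫ t : ℝ, (z - (t : ℂ))⁻¹ ∂μ

/-!
Since `μ` is a centered probability measure, `G(z) - 1/z = ∫ ((z - t)⁻¹ - z⁻¹ - t/z²) dμ(t)`,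
and the integrand equals `t² / (z² (z - t))`, of norm at most `L² / (r² (r - L))` on `[-L, L]`.
The reverse triangle inequality `‖G(z)‖ ≥ ‖z⁻¹‖ - ‖G(z) - z⁻¹‖` concludes.
-/

section NormedField

variable {𝕜 : Type*} [NormedField 𝕜] {L : ℝ} {t z : 𝕜}

theorem inv_sub_sub_inv_sub_div_sq (hz : z ≠ 0) (hzt : z - t ≠ 0) :
    (z - t)⁻¹ - z⁻¹ - t / z ^ 2 = t ^ 2 / (z ^ 2 * (z - t)) := by
  field_simp
  ring

theorem sub_le_norm_sub_of_norm_le (ht : ‖t‖ ≤ L) : ‖z‖ - L ≤ ‖z - t‖ :=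
  (sub_le_sub_left ht _).trans (norm_sub_norm_le z t)

theorem norm_inv_sub_le_of_norm_le (ht : ‖t‖ ≤ L) (hz : L < ‖z‖) :
    ‖(z - t)⁻¹‖ ≤ (‖z‖ - L)⁻¹ := by
  rw [norm_inv]
  exact inv_anti₀ (sub_pos.2 hz) (sub_le_norm_sub_of_norm_le ht)

theorem norm_inv_sub_sub_inv_sub_div_sq_le (ht : ‖t‖ ≤ L) (hz : L < ‖z‖) :
    ‖(z - t)⁻¹ - z⁻¹ - t / z ^ 2‖ ≤ L ^ 2 / ‖z‖ ^ 2 * (1 / (‖z‖ - L)) := by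
  have hL : 0 ≤ L := (norm_nonneg t).trans ht
  have hdist : 0 < ‖z‖ - L := sub_pos.2 hz
  have hzt : ‖z‖ - L ≤ ‖z - t‖ := sub_le_norm_sub_of_norm_le ht
  have hz0 : z ≠ 0 := norm_pos_iff.1 (hL.trans_lt hz)
  have hzt0 : z - t ≠ 0 := norm_pos_iff.1 (hdist.trans_le hzt)
  rw [inv_sub_sub_inv_sub_div_sq hz0 hzt0, norm_div, norm_mul, norm_pow, norm_pow,
    mul_one_div, div_div]
  gcongr

end NormedField

section CauchyTransform

variable {μ : Measure ℝ} {L : ℝ} {z : ℂ}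

theorem integrable_inv_sub_ofReal [IsFiniteMeasure μ] (hμ : ∀ᵐ t ∂μ, |t| ≤ L) (hz : L < ‖z‖) :
    Integrable (fun t : ℝ => (z - (t : ℂ))⁻¹) μ := by
  refine .of_bound (by fun_prop) (‖z‖ - L)⁻¹ ?_
  filter_upwards [hμ] with t ht
  exact norm_inv_sub_le_of_norm_le (by rwa [Complex.norm_real]) hz

theorem integrable_ofReal_of_abs_le [IsFiniteMeasure μ] (hμ : ∀ᵐ t ∂μ, |t| ≤ L) :
    Integrable (fun t : ℝ => (t : ℂ)) μ :=
  .of_bound (by fun_prop) L (by simpa only [Complex.norm_real, Real.norm_eq_abs] using hμ)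

theorem cauchyTransform_sub_inv [IsProbabilityMeasure μ] (hμ : ∀ᵐ t ∂μ, |t| ≤ L)
    (hmean : ∫ t, t ∂μ = 0) (hz : L < ‖z‖) :
    cauchyTransform μ z - z⁻¹ = ∫ t : ℝ, ((z - t)⁻¹ - z⁻¹ - t / z ^ 2) ∂μ := by
  have hmean' : ∫ t : ℝ, (t : ℂ) ∂μ = 0 := by
    rw [integral_complex_ofReal, hmean, Complex.ofReal_zero]
  have hinv := integrable_inv_sub_ofReal hμ hz
  have hinv' : Integrable (fun t : ℝ => (z - t)⁻¹ - z⁻¹) μ := hinv.sub (integrable_const z⁻¹)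
  rw [integral_sub hinv' ((integrable_ofReal_of_abs_le hμ).div_const (z ^ 2)),
    integral_sub hinv (integrable_const z⁻¹), integral_const, integral_div, hmean',
    probReal_univ, one_smul, zero_div, sub_zero, cauchyTransform]

theorem norm_cauchyTransform_sub_inv_le [IsProbabilityMeasure μ] (hμ : ∀ᵐ t ∂μ, |t| ≤ L)
    (hmean : ∫ t, t ∂μ = 0) (hz : L < ‖z‖) :
    ‖cauchyTransform μ z - z⁻¹‖ ≤ L ^ 2 / ‖z‖ ^ 2 * (1 / (‖z‖ - L)) := by
  rw [cauchyTransform_sub_inv hμ hmean hz]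
  have hbound := norm_integral_le_of_norm_le_const (μ := μ) <| hμ.mono fun t ht =>
    norm_inv_sub_sub_inv_sub_div_sq_le (t := (t : ℂ)) (by rwa [Complex.norm_real]) hz
  rwa [probReal_univ, mul_one] at hbound

end CauchyTransform

theorem stmt_4_general (L : ℝ) (μ : Measure ℝ) [IsProbabilityMeasure μ]
    (hsupp : μ (Set.Icc (-L) L)ᶜ = 0) (hmean : ∫ t : ℝ, t ∂μ = 0) :
    ∀ r : ℝ, L < r → ∀ z : ℂ, ‖z‖ = r →
      1 / r - (L ^ 2 / r ^ 2) * (1 / (r - L)) ≤ ‖cauchyTransform μ z‖ := by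
  rintro r hr z rfl
  have hμ : ∀ᵐ t ∂μ, |t| ≤ L := by
    filter_upwards [ae_iff.2 hsupp] with t ht
    exact abs_le.2 ht
  calc 1 / ‖z‖ - L ^ 2 / ‖z‖ ^ 2 * (1 / (‖z‖ - L))
      ≤ ‖z⁻¹‖ - ‖cauchyTransform μ z - z⁻¹‖ := by
        rw [norm_inv, ← one_div]
        exact sub_le_sub_left (norm_cauchyTransform_sub_inv_le hμ hmean hr) _
    _ ≤ ‖cauchyTransform μ z‖ := sub_le_iff_le_add.2 (norm_le_norm_add_norm_sub _ _)

/-- Lower bound for the Cauchy transform of a centered probability measure supported in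
`[-L, L]`, on circles `|z| = r` with `r > L`. -/
theorem stmt_4 (L : ℝ) (hL : 0 < L) (μ : Measure ℝ) [IsProbabilityMeasure μ]
    (hsupp : μ (Set.Icc (-L) L)ᶜ = 0) (hmean : ∫ t : ℝ, t ∂μ = 0) :
    ∀ r : ℝ, L < r → ∀ z : ℂ, ‖z‖ = r →
      1 / r - (L ^ 2 / r ^ 2) * (1 / (r - L)) ≤ ‖cauchyTransform μ z‖ :=
  stmt_4_general L μ hsupp hmean
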